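/- Let A and B be n×n real symmetric positive definite matrices, put S = (A+B)/2 and M = √(S⁻¹) · ((A−B)/2) · √(S⁻¹), and note that M is symmetric; let l₁,…,lₙ be the eigenvalues of M with multiplicity. Then each l_j lies in the open interval (−1, 1), and det(A+B)² · ∏_{j=1}^n (1 − l_j²) = 4^n · det(A) · det(B). -/

import Mathlib

open scoped ComplexOrder in
/-- The positive semidefinite square root of a positive semidefinite matrix
(the definition `Matrix.PosSemidef.sqrt` of Mathlib, December 2024, removed since). -/
noncomputable def Matrix.PosSemidef.sqrt {n : Type*} [Fintype n] [DecidableEq n] {𝕜 : Type*}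
    [RCLike 𝕜] {A : Matrix n n 𝕜} (hA : A.PosSemidef) : Matrix n n 𝕜 :=
  hA.1.eigenvectorUnitary.1 * Matrix.diagonal ((↑) ∘ (√·) ∘ hA.1.eigenvalues) *
  (star hA.1.eigenvectorUnitary : Matrix n n 𝕜)

/-! Whitening by `Q = √(S⁻¹)` turns `S` into `1`, so `1 + M = Q A Q` and `1 - M = Q B Q` are
positive definite, which confines the eigenvalues of `M` to `(-1, 1)`. Moreover
`det (1 - M²) = det (1 - M) det (1 + M) = det (S⁻¹)² det A det B`, while the functional calculus
gives `det (1 - M²) = ∏ (1 - l_j²)`, and `det S = 2⁻ⁿ det (A + B)`. -/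

namespace Matrix

variable {n 𝕜 : Type*} [Fintype n] [DecidableEq n] [RCLike 𝕜]

open scoped ComplexOrder

lemma PosSemidef.sqrt_eq_cfc {A : Matrix n n 𝕜} (hA : A.PosSemidef) :
    hA.sqrt = cfc Real.sqrt A := by
  rw [hA.1.cfc_eq, IsHermitian.cfc, Unitary.conjStarAlgAut_apply]
  rfl

lemma PosSemidef.isHermitian_sqrt {A : Matrix n n 𝕜} (hA : A.PosSemidef) :
    hA.sqrt.IsHermitian :=
  hA.sqrt_eq_cfc ▸ cfc_predicate _ _

lemma PosSemidef.sqrt_mul_self {A : Matrix n n 𝕜} (hA : A.PosSemidef) :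
    hA.sqrt * hA.sqrt = A := by
  rw [hA.sqrt_eq_cfc, ← cfc_mul _ _ A]
  conv_rhs => rw [← cfc_id' ℝ A hA.1]
  refine cfc_congr fun x hx ↦ Real.mul_self_sqrt ?_
  obtain ⟨i, rfl⟩ := hA.1.spectrum_real_eq_range_eigenvalues ▸ hx
  exact hA.eigenvalues_nonneg i

lemma mul_mul_eq_one_of_mul_self_eq_inv {R : Type*} [CommRing R] {Q S : Matrix n n R}
    (hS : IsUnit S.det) (hQ : Q * Q = S⁻¹) : Q * S * Q = 1 := by
  rw [mul_eq_one_comm, ← Matrix.mul_assoc, hQ, nonsing_inv_mul S hS]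

lemma PosDef.mul_mul_same_of_isHermitian {X Q : Matrix n n 𝕜} (hX : X.PosDef)
    (hQ : Q.IsHermitian) (hQu : IsUnit Q) : (Q * X * Q).PosDef := by
  simpa [star_eq_conjTranspose, hQ.eq] using (IsUnit.posDef_star_left_conjugate_iff hQu).mpr hX

omit [DecidableEq n] in
lemma PosDef.re_dotProduct_mulVec_pos {N : Matrix n n 𝕜} (hN : N.PosDef) {x : n → 𝕜}
    (hx : x ≠ 0) : 0 < RCLike.re (star x ⬝ᵥ (N *ᵥ x)) :=
  (RCLike.pos_iff.mp (hN.dotProduct_mulVec_pos hx)).1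

namespace IsHermitian

variable {M : Matrix n n 𝕜} (hM : M.IsHermitian)

lemma star_dotProduct_eigenvectorBasis_self (j : n) :
    star ⇑(hM.eigenvectorBasis j) ⬝ᵥ ⇑(hM.eigenvectorBasis j) = 1 := by
  rw [dotProduct_comm, ← EuclideanSpace.inner_eq_star_dotProduct, inner_self_eq_norm_sq_to_K,
    hM.eigenvectorBasis.orthonormal.1 j]
  simp

lemma neg_one_lt_eigenvalues (h : (1 + M).PosDef) (j : n) : -1 < hM.eigenvalues j := by
  have hv := hM.star_dotProduct_eigenvectorBasis_self j
  have hpos := h.re_dotProduct_mulVec_pos (x := ⇑(hM.eigenvectorBasis j))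
    (fun h0 ↦ by simp [h0] at hv)
  rw [add_mulVec, one_mulVec, dotProduct_add, hv, map_add, RCLike.one_re,
    ← hM.eigenvalues_eq] at hpos
  linarith

lemma eigenvalues_lt_one (h : (1 - M).PosDef) (j : n) : hM.eigenvalues j < 1 := by
  have hv := hM.star_dotProduct_eigenvectorBasis_self j
  have hpos := h.re_dotProduct_mulVec_pos (x := ⇑(hM.eigenvectorBasis j))
    (fun h0 ↦ by simp [h0] at hv)
  rw [sub_mulVec, one_mulVec, dotProduct_sub, hv, map_sub, RCLike.one_re,
    ← hM.eigenvalues_eq] at hpos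
  linarith

lemma det_one_sub_mul_self : (1 - M * M).det = ∏ i, (1 - (hM.eigenvalues i : 𝕜) ^ 2) := by
  have h := congrArg (Polynomial.eval 1) (hM.charpoly_cfc_eq (· ^ 2))
  -- the two `cfc`s are found through different (defeq) instance paths
  erw [cfc_pow_id M 2 hM] at h
  rw [sq, eval_charpoly, map_one] at h
  simpa [Polynomial.eval_prod] using h

end IsHermitian

end Matrix

open Matrix

/-- For `A`, `B` real symmetric positive definite, with `S = (A+B)/2` and
`M = √(S⁻¹)·((A−B)/2)·√(S⁻¹)` (which is symmetric, hence Hermitian), with eigenvalues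
`l₁, …, lₙ` (with multiplicity): each `l_j ∈ (−1, 1)` and
`det (A+B)² · ∏ⱼ (1 − l_j²) = 4^n · det A · det B`. -/
theorem bartlett_det_identity {n : ℕ} (A B : Matrix (Fin n) (Fin n) ℝ)
    (hA : A.PosDef) (hB : B.PosDef)
    (S M : Matrix (Fin n) (Fin n) ℝ)
    (hS : S = (2 : ℝ)⁻¹ • (A + B)) (hSpd : S.PosDef)
    (hM : M = hSpd.inv.posSemidef.sqrt * ((2 : ℝ)⁻¹ • (A - B)) * hSpd.inv.posSemidef.sqrt)
    (hMh : M.IsHermitian) :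
    (∀ j, hMh.eigenvalues j ∈ Set.Ioo (-1 : ℝ) 1) ∧
      (A + B).det ^ 2 * ∏ j, (1 - hMh.eigenvalues j ^ 2) =
        4 ^ n * A.det * B.det := by
  set Q := hSpd.inv.posSemidef.sqrt
  have hQQ : Q * Q = S⁻¹ := hSpd.inv.posSemidef.sqrt_mul_self
  have hQSQ : Q * S * Q = 1 :=
    mul_mul_eq_one_of_mul_self_eq_inv ((isUnit_iff_isUnit_det S).mp hSpd.isUnit) hQQ
  have hQ : IsUnit Q :=
    (isUnit_iff_isUnit_det Q).mpr (isUnit_det_of_right_inverse (Matrix.mul_assoc Q S Q ▸ hQSQ))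
  have hAQ : 1 + M = Q * A * Q := by
    rw [hM, ← hQSQ, ← Matrix.add_mul, ← Matrix.mul_add, hS]; congr 2; module
  have hBQ : 1 - M = Q * B * Q := by
    rw [hM, ← hQSQ, ← Matrix.sub_mul, ← Matrix.mul_sub, hS]; congr 2; module
  have hQh := hSpd.inv.posSemidef.isHermitian_sqrt
  refine ⟨fun j ↦ ⟨hMh.neg_one_lt_eigenvalues (hAQ ▸ hA.mul_mul_same_of_isHermitian hQh hQ) j,
    hMh.eigenvalues_lt_one (hBQ ▸ hB.mul_mul_same_of_isHermitian hQh hQ) j⟩, ?_⟩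
  have hprod : ∏ j, (1 - hMh.eigenvalues j ^ 2) = S⁻¹.det ^ 2 * A.det * B.det := by
    have h := hMh.det_one_sub_mul_self
    rw [show 1 - M * M = (1 - M) * (1 + M) by noncomm_ring, det_mul, hAQ, hBQ] at h
    simp only [RCLike.ofReal_real_eq_id, id_eq] at h
    rw [← h, ← hQQ]
    simp only [det_mul]
    ring
  have hdet : (A + B).det ≠ 0 := (hA.add hB).det_pos.ne'
  have hSinv : S⁻¹.det = 2 ^ n / (A + B).det := by
    rw [det_nonsing_inv, hS, det_smul, Ring.inverse_eq_inv', Fintype.card_fin, mul_inv, inv_pow,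
      inv_inv, div_eq_mul_inv]
  rw [hprod, hSinv, show (4 : ℝ) ^ n = (2 ^ n) ^ 2 by rw [← pow_mul, mul_comm, pow_mul]; norm_num]
  field_simp
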